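/- Let n ∈ ℕ and let g be a Lie subalgebra of n_n(k) that is isomorphic (as a Lie algebra over k) to L_{6,9}. Then n ≥ 6. -/

import Mathlib

attribute [local instance 100] LieRing.ofAssociativeRing

/-- The Lie algebra `n_n(k)` of strictly upper triangular `n × n` matrices over `k`. -/
def strictUpper (k : Type*) [Field k] (n : ℕ) :
    LieSubalgebra k (Matrix (Fin n) (Fin n) k) where
  carrier := {A | ∀ i j : Fin n, j ≤ i → A i j = 0}
  add_mem' := by
    intro A B hA hB i j hij
    simp [Matrix.add_apply, hA i j hij, hB i j hij]
  zero_mem' := by intro i j hij; simp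
  smul_mem' := by
    intro c A hA i j hij
    simp [Matrix.smul_apply, hA i j hij]
  lie_mem' := by
    intro A B hA hB i j hij
    have key : ∀ (X Y : Matrix (Fin n) (Fin n) k),
        (∀ i j : Fin n, j ≤ i → X i j = 0) → (∀ i j : Fin n, j ≤ i → Y i j = 0) →
        (X * Y) i j = 0 := by
      intro X Y hX hY
      rw [Matrix.mul_apply]
      apply Finset.sum_eq_zero
      intro l _
      by_cases h : l ≤ i
      · rw [hX i l h, zero_mul]
      · push_neg at h
        rw [hY l j (hij.trans h.le), mul_zero]
    have hbr : ⁅A, B⁆ = A * B - B * A := Ring.lie_def A B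
    rw [hbr, Matrix.sub_apply, key A B hA hB, key B A hB hA, sub_zero]

/-- A basis of a Lie algebra realizing the bracket table of `L_{6,9} = L_{5,9} ⊕ k`:
`[X1,X2] = X3`, `[X1,X3] = Z1`, `[X2,X3] = Z2`, all other brackets of basis vectors zero.
Here `X1, X2, X3, X4, Z1, Z2` are `b 0, b 1, b 2, b 3, b 4, b 5`. -/
def IsL69Basis {k L : Type*} [Field k] [LieRing L] [LieAlgebra k L]
    (b : Module.Basis (Fin 6) k L) : Prop :=
  ⁅b 0, b 1⁆ = b 2 ∧ ⁅b 0, b 2⁆ = b 4 ∧ ⁅b 1, b 2⁆ = b 5 ∧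
  ⁅b 0, b 3⁆ = 0 ∧ ⁅b 0, b 4⁆ = 0 ∧ ⁅b 0, b 5⁆ = 0 ∧
  ⁅b 1, b 3⁆ = 0 ∧ ⁅b 1, b 4⁆ = 0 ∧ ⁅b 1, b 5⁆ = 0 ∧
  ⁅b 2, b 3⁆ = 0 ∧ ⁅b 2, b 4⁆ = 0 ∧ ⁅b 2, b 5⁆ = 0 ∧
  ⁅b 3, b 4⁆ = 0 ∧ ⁅b 3, b 5⁆ = 0 ∧ ⁅b 4, b 5⁆ = 0

/-!
Let `A, B, E, Z₁, Z₂` be the matrices of `X1, X2, X4, Z1, Z2`, and let `upperBand k n m` consist of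
the matrices vanishing below the `m`-th superdiagonal: the `m`-th term of the lower central series
of `n_n(k)`. Since `Z₁, Z₂ ∈ upperBand k n 3`, which is at most one-dimensional when `n ≤ 4`, we get
`5 ≤ n`. For `n = 5` everything in `n_5(k)` commuting with `A` and `B` lies in `span {Z₁, Z₂}`,
which `E` does not.

For `Z ∈ upperBand k 5 3` the only possibly nonzero entry of `⁅X, Z⁆` is
`X 0 1 * Z 1 4 - Z 0 3 * X 3 4`, at `(0, 4)`. So the centrality of `Z₁, Z₂` makes their classes
modulo `upperBand k 5 4` proportional, and after a change of basis of `span {A, B}` and possibly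
the reflection in the antidiagonal we may assume `Z₂ ∈ upperBand k 5 4` and `Z₁ 1 4 ≠ 0`.
Comparing the entries of `⁅A, E⁆ = ⁅B, E⁆ = 0` one superdiagonal at a time pushes `E` into
`upperBand k 5 3`; there the same formula makes `(E 0 3, E 1 4)` proportional to
`(Z₁ 0 3, Z₁ 1 4)`, so `E ∈ span {Z₁, Z₂}`.
-/

namespace StrictUpperBand

section General

def upperBand (R : Type*) [CommRing R] (n m : ℕ) : Submodule R (Matrix (Fin n) (Fin n) R) where
  carrier := {X | ∀ i j : Fin n, (j : ℕ) < i + m → X i j = 0}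
  add_mem' hX hY i j h := by simp [hX i j h, hY i j h]
  zero_mem' _ _ _ := rfl
  smul_mem' c X hX i j h := by simp [hX i j h]

variable {R : Type*} [CommRing R] {n : ℕ} {X Y : Matrix (Fin n) (Fin n) R} {p q : ℕ}

lemma mem_upperBand_iff : X ∈ upperBand R n p ↔ ∀ i j : Fin n, (j : ℕ) < i + p → X i j = 0 :=
  Iff.rfl

lemma upperBand_anti (h : p ≤ q) : upperBand R n q ≤ upperBand R n p :=
  fun _ hX i j hij => hX i j (by omega)

lemma mul_mem_upperBand (hX : X ∈ upperBand R n p) (hY : Y ∈ upperBand R n q) :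
    X * Y ∈ upperBand R n (p + q) := by
  intro i j hij
  rw [Matrix.mul_apply]
  refine Finset.sum_eq_zero fun l _ => ?_
  by_cases hl : (l : ℕ) < i + p
  · rw [hX i l hl, zero_mul]
  · rw [hY l j (by omega), mul_zero]

lemma lie_mem_upperBand (hX : X ∈ upperBand R n p) (hY : Y ∈ upperBand R n q) :
    ⁅X, Y⁆ ∈ upperBand R n (p + q) := by
  rw [Ring.lie_def]
  exact sub_mem (mul_mem_upperBand hX hY) (add_comm q p ▸ mul_mem_upperBand hY hX)

lemma mem_upperBand_succ (hX : X ∈ upperBand R n p)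
    (hdiag : ∀ i j : Fin n, (j : ℕ) = i + p → X i j = 0) : X ∈ upperBand R n (p + 1) := by
  intro i j hij
  rcases Nat.lt_or_ge (j : ℕ) (i + p) with h | h
  · exact hX i j h
  · exact hdiag i j (by omega)

lemma mem_upperBand_one_of_mem_strictUpper {k : Type*} [Field k] {X : Matrix (Fin n) (Fin n) k}
    (hX : X ∈ strictUpper k n) : X ∈ upperBand k n 1 :=
  fun i j hij => hX i j (Fin.le_iff_val_le_val.mpr (by omega))

lemma eq_zero_of_mem_upperBand (hn : n ≤ p + 1) (hX : X ∈ upperBand R n p) {i j : Fin n}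
    (hij : ¬((i : ℕ) = 0 ∧ (j : ℕ) = p)) : X i j = 0 :=
  hX i j (by omega)

lemma smul_eq_smul_of_mem_upperBand (hn : n ≤ p + 1) (hX : X ∈ upperBand R n p)
    (hY : Y ∈ upperBand R n p) (i j : Fin n) : Y i j • X = X i j • Y := by
  ext i' j'
  simp only [Matrix.smul_apply, smul_eq_mul]
  by_cases h : (i : ℕ) = 0 ∧ (j : ℕ) = p
  · by_cases h' : (i' : ℕ) = 0 ∧ (j' : ℕ) = p
    · rw [Fin.ext (h'.1.trans h.1.symm), Fin.ext (h'.2.trans h.2.symm), mul_comm]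
    · rw [eq_zero_of_mem_upperBand hn hX h', eq_zero_of_mem_upperBand hn hY h', mul_zero,
        mul_zero]
  · rw [eq_zero_of_mem_upperBand hn hX h, eq_zero_of_mem_upperBand hn hY h, zero_mul, zero_mul]

lemma lie_apply_eq_zero_of_commute (h : Commute X Y) (i j : Fin n) : ⁅X, Y⁆ i j = 0 := by
  rw [commute_iff_lie_eq.mp h, Matrix.zero_apply]

lemma add_two_le_of_linearIndependent [Nontrivial R] (hX : X ∈ upperBand R n p)
    (hY : Y ∈ upperBand R n p) (hind : LinearIndependent R ![X, Y]) : p + 2 ≤ n := by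
  by_contra! hn
  obtain ⟨i, j, hij⟩ : ∃ i j, X i j ≠ 0 := by
    by_contra! h
    exact hind.ne_zero 0 (Matrix.ext h)
  have h := smul_eq_smul_of_mem_upperBand (by omega) hX hY i j
  exact hij (neg_eq_zero.mp (LinearIndependent.pair_iff.mp hind (Y i j) (-X i j)
    (by rw [neg_smul, ← sub_eq_add_neg, h, sub_self])).2)

def negAntitranspose : Matrix (Fin n) (Fin n) R ≃ₗ⁅R⁆ Matrix (Fin n) (Fin n) R where
  toFun X := Matrix.of fun i j => -X (Fin.rev j) (Fin.rev i)
  invFun X := Matrix.of fun i j => -X (Fin.rev j) (Fin.rev i)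
  map_add' X Y := by ext; simp; ring
  map_smul' c X := by ext; simp
  map_lie' {X Y} := by
    ext i j
    simp only [Ring.lie_def, Matrix.of_apply, Matrix.sub_apply, Matrix.mul_apply, neg_mul_neg,
      ← Finset.sum_sub_distrib, ← Finset.sum_neg_distrib]
    exact Fintype.sum_equiv Fin.revPerm _ _ fun l => by
      simp only [Fin.revPerm_apply, Fin.rev_rev]; ring
  left_inv X := by ext; simp
  right_inv X := by ext; simp

@[simp]
lemma negAntitranspose_apply (i j : Fin n) :
    negAntitranspose X i j = -X (Fin.rev j) (Fin.rev i) :=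
  rfl

lemma negAntitranspose_mem_upperBand (hX : X ∈ upperBand R n p) :
    negAntitranspose X ∈ upperBand R n p := by
  intro i j hij
  rw [negAntitranspose_apply, hX _ _ (by simp only [Fin.val_rev]; omega), neg_zero]

lemma _root_.Commute.negAntitranspose (h : Commute X Y) :
    Commute (negAntitranspose X) (negAntitranspose Y) := by
  rw [commute_iff_lie_eq, ← LieEquiv.map_lie, commute_iff_lie_eq.mp h, map_zero]

end General

section FiveByFive

variable {R : Type*} [CommRing R] {X Y : Matrix (Fin 5) (Fin 5) R}

lemma lie_apply_zero_two (hX : X ∈ upperBand R 5 1) (hY : Y ∈ upperBand R 5 1) :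
    ⁅X, Y⁆ 0 2 = X 0 1 * Y 1 2 - Y 0 1 * X 1 2 := by
  rw [mem_upperBand_iff] at hX hY
  simp (disch := decide) only [Ring.lie_def, Matrix.sub_apply, Matrix.mul_apply,
    Fin.sum_univ_five, hX, hY]
  ring

lemma lie_apply_one_three (hX : X ∈ upperBand R 5 1) (hY : Y ∈ upperBand R 5 1) :
    ⁅X, Y⁆ 1 3 = X 1 2 * Y 2 3 - Y 1 2 * X 2 3 := by
  rw [mem_upperBand_iff] at hX hY
  simp (disch := decide) only [Ring.lie_def, Matrix.sub_apply, Matrix.mul_apply,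
    Fin.sum_univ_five, hX, hY]
  ring

lemma lie_apply_two_four (hX : X ∈ upperBand R 5 1) (hY : Y ∈ upperBand R 5 1) :
    ⁅X, Y⁆ 2 4 = X 2 3 * Y 3 4 - Y 2 3 * X 3 4 := by
  rw [mem_upperBand_iff] at hX hY
  simp (disch := decide) only [Ring.lie_def, Matrix.sub_apply, Matrix.mul_apply,
    Fin.sum_univ_five, hX, hY]
  ring

lemma lie_apply_zero_three (hX : X ∈ upperBand R 5 1) (hY : Y ∈ upperBand R 5 2) :
    ⁅X, Y⁆ 0 3 = X 0 1 * Y 1 3 - Y 0 2 * X 2 3 := by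
  rw [mem_upperBand_iff] at hX hY
  simp (disch := decide) only [Ring.lie_def, Matrix.sub_apply, Matrix.mul_apply,
    Fin.sum_univ_five, hX, hY]
  ring

lemma lie_apply_one_four (hX : X ∈ upperBand R 5 1) (hY : Y ∈ upperBand R 5 2) :
    ⁅X, Y⁆ 1 4 = X 1 2 * Y 2 4 - Y 1 3 * X 3 4 := by
  rw [mem_upperBand_iff] at hX hY
  simp (disch := decide) only [Ring.lie_def, Matrix.sub_apply, Matrix.mul_apply,
    Fin.sum_univ_five, hX, hY]
  ring

lemma lie_apply_zero_four (hX : X ∈ upperBand R 5 1) (hY : Y ∈ upperBand R 5 2) :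
    ⁅X, Y⁆ 0 4 = X 0 1 * Y 1 4 + X 0 2 * Y 2 4 - Y 0 2 * X 2 4 - Y 0 3 * X 3 4 := by
  rw [mem_upperBand_iff] at hX hY
  simp (disch := decide) only [Ring.lie_def, Matrix.sub_apply, Matrix.mul_apply,
    Fin.sum_univ_five, hX, hY]
  ring

lemma lie_apply_zero_four_of_mem_three (hX : X ∈ upperBand R 5 1) (hY : Y ∈ upperBand R 5 3) :
    ⁅X, Y⁆ 0 4 = X 0 1 * Y 1 4 - Y 0 3 * X 3 4 := by
  rw [lie_apply_zero_four hX (upperBand_anti (by norm_num) hY), hY 2 4 (by decide),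
    hY 0 2 (by decide)]
  ring

lemma mem_upperBand_two (hX : X ∈ upperBand R 5 1)
    (h0 : X 0 1 = 0) (h1 : X 1 2 = 0) (h2 : X 2 3 = 0) (h3 : X 3 4 = 0) :
    X ∈ upperBand R 5 2 :=
  mem_upperBand_succ hX fun i j h => by fin_cases i <;> fin_cases j <;> simp_all

lemma mem_upperBand_three (hX : X ∈ upperBand R 5 2)
    (h0 : X 0 2 = 0) (h1 : X 1 3 = 0) (h2 : X 2 4 = 0) : X ∈ upperBand R 5 3 :=
  mem_upperBand_succ hX fun i j h => by fin_cases i <;> fin_cases j <;> simp_all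

lemma mem_upperBand_four (hX : X ∈ upperBand R 5 3) (h0 : X 0 3 = 0) (h1 : X 1 4 = 0) :
    X ∈ upperBand R 5 4 :=
  mem_upperBand_succ hX fun i j h => by fin_cases i <;> fin_cases j <;> simp_all

lemma apply_zero_four_ne_zero (hX : X ∈ upperBand R 5 4) (hX₀ : X ≠ 0) : X 0 4 ≠ 0 := by
  refine fun h => hX₀ (Matrix.ext fun i j => ?_)
  by_cases hij : i = 0 ∧ j = 4
  · rw [hij.1, hij.2, h, Matrix.zero_apply]
  · exact hX i j (by fin_cases i <;> fin_cases j <;> simp_all)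

end FiveByFive

section Centralizer

variable {k : Type*} [Field k] {A B C E Z₁ Z₂ : Matrix (Fin 5) (Fin 5) k}

lemma mem_upperBand_two_of_commute (hA : A ∈ upperBand k 5 1) (hB : B ∈ upperBand k 5 1)
    (hE : E ∈ upperBand k 5 1) (hC : ⁅A, B⁆ = C) (hZ₁ : ⁅A, C⁆ = Z₁)
    (hAE : Commute A E) (hBE : Commute B E) (hw : Z₁ 1 4 ≠ 0) : E ∈ upperBand k 5 2 := by
  have hC₂ : C ∈ upperBand k 5 2 := hC ▸ lie_mem_upperBand hA hB
  have hw' : Z₁ 1 4 = A 1 2 * (A 2 3 * B 3 4 - B 2 3 * A 3 4)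
      - (A 1 2 * B 2 3 - B 1 2 * A 2 3) * A 3 4 := by
    rw [← hZ₁, lie_apply_one_four hA hC₂, ← hC, lie_apply_one_three hA hB,
      lie_apply_two_four hA hB]
  rw [hw'] at hw
  have rA₀ := (lie_apply_zero_two hA hE).symm.trans (lie_apply_eq_zero_of_commute hAE 0 2)
  have rA₁ := (lie_apply_one_three hA hE).symm.trans (lie_apply_eq_zero_of_commute hAE 1 3)
  have rA₂ := (lie_apply_two_four hA hE).symm.trans (lie_apply_eq_zero_of_commute hAE 2 4)
  have rB₀ := (lie_apply_zero_two hB hE).symm.trans (lie_apply_eq_zero_of_commute hBE 0 2)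
  have rB₁ := (lie_apply_one_three hB hE).symm.trans (lie_apply_eq_zero_of_commute hBE 1 3)
  have rB₂ := (lie_apply_two_four hB hE).symm.trans (lie_apply_eq_zero_of_commute hBE 2 4)
  have e₂ : E 2 3 = 0 := by
    refine (mul_eq_zero.mp ?_).resolve_right hw
    linear_combination A 1 2 * (B 2 3 * rA₂ - A 2 3 * rB₂) - A 3 4 * (B 2 3 * rA₁ - A 2 3 * rB₁)
  rw [e₂] at rA₁ rA₂ rB₁ rB₂
  have e₁ : E 1 2 = 0 := by
    refine (mul_eq_zero.mp ?_).resolve_right hw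
    linear_combination -(A 1 2 * B 3 4 + B 1 2 * A 3 4) * rA₁ + 2 * A 1 2 * A 3 4 * rB₁
  have e₃ : E 3 4 = 0 := by
    refine (mul_eq_zero.mp ?_).resolve_right hw
    linear_combination (A 1 2 * B 3 4 + B 1 2 * A 3 4) * rA₂ - 2 * A 1 2 * A 3 4 * rB₂
  rw [e₁] at rA₀ rB₀
  have e₀ : E 0 1 = 0 := by
    refine (mul_eq_zero.mp ?_).resolve_right hw
    linear_combination -(A 2 3 * B 3 4 - 2 * A 3 4 * B 2 3) * rA₀ - A 2 3 * A 3 4 * rB₀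
  exact mem_upperBand_two hE e₀ e₁ e₂ e₃

lemma apply_one_three_eq_zero_of_commute (hA : A ∈ upperBand k 5 1) (hB : B ∈ upperBand k 5 1)
    (hE : E ∈ upperBand k 5 2) (hC : ⁅A, B⁆ = C) (hZ₁ : ⁅A, C⁆ = Z₁) (hZ₂ : ⁅B, C⁆ = Z₂)
    (hAE : Commute A E) (hBE : Commute B E) (hBZ₁ : Commute B Z₁)
    (hZ₂4 : Z₂ ∈ upperBand k 5 4) (hγ : Z₂ 0 4 ≠ 0) (hw : Z₁ 1 4 ≠ 0) : E 1 3 = 0 := by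
  have hC₂ : C ∈ upperBand k 5 2 := hC ▸ lie_mem_upperBand hA hB
  have hc₀ : C 0 2 = A 0 1 * B 1 2 - B 0 1 * A 1 2 := hC ▸ lie_apply_zero_two hA hB
  have hc₁ : C 1 3 = A 1 2 * B 2 3 - B 1 2 * A 2 3 := hC ▸ lie_apply_one_three hA hB
  have hc₂ : C 2 4 = A 2 3 * B 3 4 - B 2 3 * A 3 4 := hC ▸ lie_apply_two_four hA hB
  have hw' : Z₁ 1 4 = A 1 2 * C 2 4 - C 1 3 * A 3 4 := hZ₁ ▸ lie_apply_one_four hA hC₂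
  have hw₂ : B 1 2 * C 2 4 - C 1 3 * B 3 4 = 0 :=
    (hZ₂ ▸ lie_apply_one_four hB hC₂).symm.trans (hZ₂4 1 4 (by decide))
  have hγ' : Z₂ 0 4 = B 0 1 * C 1 4 + B 0 2 * C 2 4 - C 0 2 * B 2 4 - C 0 3 * B 3 4 :=
    hZ₂ ▸ lie_apply_zero_four hB hC₂
  have hcent := (lie_apply_zero_four_of_mem_three hB (hZ₁ ▸ lie_mem_upperBand hA hC₂)).symm.trans
    (lie_apply_eq_zero_of_commute hBZ₁ 0 4)
  have rA₁ := (lie_apply_one_four hA hE).symm.trans (lie_apply_eq_zero_of_commute hAE 1 4)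
  have rB₀ := (lie_apply_zero_three hB hE).symm.trans (lie_apply_eq_zero_of_commute hBE 0 3)
  have rB₁ := (lie_apply_one_four hB hE).symm.trans (lie_apply_eq_zero_of_commute hBE 1 4)
  have rB₀₄ := (lie_apply_zero_four hB hE).symm.trans (lie_apply_eq_zero_of_commute hBE 0 4)
  by_cases hb₁ : B 1 2 = 0
  · by_cases hb₃ : B 3 4 = 0
    · have hb₀ : B 0 1 = 0 :=
        (mul_eq_zero.mp (by linear_combination hcent + Z₁ 0 3 * hb₃)).resolve_right hw
      rw [show Z₁ 1 4 = B 2 3 * (-2 * A 1 2 * A 3 4) by rw [hw', hc₁, hc₂, hb₁, hb₃]; ring] at hw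
      have hf₀ : E 0 2 = 0 := (mul_eq_zero.mp (by
        linear_combination -rB₀ + E 1 3 * hb₀)).resolve_right (left_ne_zero_of_mul hw)
      have hγ'' : Z₂ 0 4 = B 0 2 * C 2 4 := by rw [hγ', hc₀, hb₀, hb₁, hb₃]; ring
      rw [hγ''] at hγ
      have hf₂ : E 2 4 = 0 := (mul_eq_zero.mp (by
        linear_combination rB₀₄ - E 1 4 * hb₀ + B 2 4 * hf₀ + E 0 3 * hb₃)).resolve_left
        (left_ne_zero_of_mul hγ)
      exact (mul_eq_zero.mp (by linear_combination -rA₁ + A 1 2 * hf₂)).resolve_right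
        (right_ne_zero_of_mul (right_ne_zero_of_mul hw))
    · exact (mul_eq_zero.mp (by linear_combination -rB₁ + E 2 4 * hb₁)).resolve_right hb₃
  · have hs : B 1 2 * Z₁ 1 4 = C 1 3 * (A 1 2 * B 3 4 - A 3 4 * B 1 2) := by
      rw [hw']; linear_combination A 1 2 * hw₂
    refine (mul_eq_zero.mp ?_).resolve_right (right_ne_zero_of_mul (hs ▸ mul_ne_zero hb₁ hw))
    linear_combination -A 1 2 * rB₁ + B 1 2 * rA₁

lemma mem_upperBand_three_of_commute (hA : A ∈ upperBand k 5 1) (hB : B ∈ upperBand k 5 1)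
    (hE : E ∈ upperBand k 5 2) (hC : ⁅A, B⁆ = C) (hZ₁ : ⁅A, C⁆ = Z₁) (hZ₂ : ⁅B, C⁆ = Z₂)
    (hAE : Commute A E) (hBE : Commute B E) (hBZ₁ : Commute B Z₁)
    (hZ₂4 : Z₂ ∈ upperBand k 5 4) (hγ : Z₂ 0 4 ≠ 0) (hw : Z₁ 1 4 ≠ 0) :
    E ∈ upperBand k 5 3 := by
  have hf₁ := apply_one_three_eq_zero_of_commute hA hB hE hC hZ₁ hZ₂ hAE hBE hBZ₁ hZ₂4 hγ hw
  have hw' : Z₁ 1 4 = A 1 2 * (A 2 3 * B 3 4 - B 2 3 * A 3 4)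
      - (A 1 2 * B 2 3 - B 1 2 * A 2 3) * A 3 4 := by
    rw [← hZ₁, lie_apply_one_four hA (hC ▸ lie_mem_upperBand hA hB), ← hC,
      lie_apply_one_three hA hB, lie_apply_two_four hA hB]
  rw [hw'] at hw
  have rA₀ := (lie_apply_zero_three hA hE).symm.trans (lie_apply_eq_zero_of_commute hAE 0 3)
  have rA₁ := (lie_apply_one_four hA hE).symm.trans (lie_apply_eq_zero_of_commute hAE 1 4)
  have rB₀ := (lie_apply_zero_three hB hE).symm.trans (lie_apply_eq_zero_of_commute hBE 0 3)
  have rB₁ := (lie_apply_one_four hB hE).symm.trans (lie_apply_eq_zero_of_commute hBE 1 4)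
  rw [hf₁] at rA₀ rA₁ rB₀ rB₁
  have hf₀ : E 0 2 = 0 := by
    refine (mul_eq_zero.mp ?_).resolve_right hw
    linear_combination -(A 1 2 * B 3 4 + B 1 2 * A 3 4) * rA₀ + 2 * A 1 2 * A 3 4 * rB₀
  have hf₂ : E 2 4 = 0 := by
    refine (mul_eq_zero.mp ?_).resolve_right hw
    linear_combination (A 2 3 * B 3 4 - 2 * A 3 4 * B 2 3) * rA₁ + A 2 3 * A 3 4 * rB₁
  exact mem_upperBand_three hE hf₀ hf₁ hf₂

lemma mem_span_of_commute_of_mem_upperBand_three (hA : A ∈ upperBand k 5 1)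
    (hB : B ∈ upperBand k 5 1) (hE : E ∈ upperBand k 5 3) (hC : ⁅A, B⁆ = C) (hZ₁ : ⁅A, C⁆ = Z₁)
    (hAE : Commute A E) (hBE : Commute B E) (hAZ₁ : Commute A Z₁) (hBZ₁ : Commute B Z₁)
    (hZ₂4 : Z₂ ∈ upperBand k 5 4) (hγ : Z₂ 0 4 ≠ 0) (hw : Z₁ 1 4 ≠ 0) :
    E ∈ Submodule.span k {Z₁, Z₂} := by
  have hC₂ : C ∈ upperBand k 5 2 := hC ▸ lie_mem_upperBand hA hB
  have hZ₁₃ : Z₁ ∈ upperBand k 5 3 := hZ₁ ▸ lie_mem_upperBand hA hC₂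
  have hw' : Z₁ 1 4 = A 1 2 * C 2 4 - C 1 3 * A 3 4 := hZ₁ ▸ lie_apply_one_four hA hC₂
  have hc₂ : C 2 4 = A 2 3 * B 3 4 - B 2 3 * A 3 4 := hC ▸ lie_apply_two_four hA hB
  have rA := (lie_apply_zero_four_of_mem_three hA hE).symm.trans
    (lie_apply_eq_zero_of_commute hAE 0 4)
  have rB := (lie_apply_zero_four_of_mem_three hB hE).symm.trans
    (lie_apply_eq_zero_of_commute hBE 0 4)
  have cA := (lie_apply_zero_four_of_mem_three hA hZ₁₃).symm.trans
    (lie_apply_eq_zero_of_commute hAZ₁ 0 4)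
  have cB := (lie_apply_zero_four_of_mem_three hB hZ₁₃).symm.trans
    (lie_apply_eq_zero_of_commute hBZ₁ 0 4)
  set D := E 0 3 * Z₁ 1 4 - E 1 4 * Z₁ 0 3
  have hA₃ : A 3 4 * D = 0 := by linear_combination -Z₁ 1 4 * rA + E 1 4 * cA
  have hB₃ : B 3 4 * D = 0 := by linear_combination -Z₁ 1 4 * rB + E 1 4 * cB
  have hD₀ : D = 0 := (mul_eq_zero.mp (by
    linear_combination D * hw' + A 1 2 * D * hc₂ + A 1 2 * A 2 3 * hB₃
      - (A 1 2 * B 2 3 + C 1 3) * hA₃)).resolve_left hw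
  set t := E 1 4 / Z₁ 1 4
  have hF : E - t • Z₁ ∈ upperBand k 5 4 := by
    refine mem_upperBand_four (sub_mem hE (Submodule.smul_mem _ t hZ₁₃)) ?_ ?_
    · simp only [Matrix.sub_apply, Matrix.smul_apply, smul_eq_mul, t]
      field_simp
      linear_combination hD₀
    · simp only [Matrix.sub_apply, Matrix.smul_apply, smul_eq_mul, t]
      field_simp
      ring
  have h := smul_eq_smul_of_mem_upperBand (by norm_num) hZ₂4 hF 0 4
  refine Submodule.mem_span_pair.mpr ⟨t, (Z₂ 0 4)⁻¹ * (E - t • Z₁) 0 4, ?_⟩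
  rw [mul_smul, h, inv_smul_smul₀ hγ, add_sub_cancel]

lemma mem_span_of_commute_of_apply_one_four_ne_zero (hA : A ∈ upperBand k 5 1)
    (hB : B ∈ upperBand k 5 1) (hE : E ∈ upperBand k 5 1) (hC : ⁅A, B⁆ = C) (hZ₁ : ⁅A, C⁆ = Z₁)
    (hZ₂ : ⁅B, C⁆ = Z₂) (hAE : Commute A E) (hBE : Commute B E) (hAZ₁ : Commute A Z₁)
    (hBZ₁ : Commute B Z₁) (hZ₂4 : Z₂ ∈ upperBand k 5 4) (hγ : Z₂ 0 4 ≠ 0) (hw : Z₁ 1 4 ≠ 0) :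
    E ∈ Submodule.span k {Z₁, Z₂} := by
  have hE₂ := mem_upperBand_two_of_commute hA hB hE hC hZ₁ hAE hBE hw
  have hE₃ := mem_upperBand_three_of_commute hA hB hE₂ hC hZ₁ hZ₂ hAE hBE hBZ₁ hZ₂4 hγ hw
  exact mem_span_of_commute_of_mem_upperBand_three hA hB hE₃ hC hZ₁ hAE hBE hAZ₁ hBZ₁ hZ₂4 hγ hw

lemma mem_span_of_commute_of_mem_upperBand_four (hA : A ∈ upperBand k 5 1)
    (hB : B ∈ upperBand k 5 1) (hE : E ∈ upperBand k 5 1) (hC : ⁅A, B⁆ = C) (hZ₁ : ⁅A, C⁆ = Z₁)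
    (hZ₂ : ⁅B, C⁆ = Z₂) (hAE : Commute A E) (hBE : Commute B E) (hAZ₁ : Commute A Z₁)
    (hBZ₁ : Commute B Z₁) (hZ₂4 : Z₂ ∈ upperBand k 5 4) (hZ₂0 : Z₂ ≠ 0)
    (hZ₁4 : Z₁ ∉ upperBand k 5 4) : E ∈ Submodule.span k {Z₁, Z₂} := by
  have hγ := apply_zero_four_ne_zero hZ₂4 hZ₂0
  have hZ₁₃ : Z₁ ∈ upperBand k 5 3 := hZ₁ ▸ lie_mem_upperBand hA (hC ▸ lie_mem_upperBand hA hB)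
  rcases not_and_or.mp fun h => hZ₁4 (mem_upperBand_four hZ₁₃ h.1 h.2) with hu | hw
  -- The reflection in the antidiagonal exchanges the entries `(0, 3)` and `(1, 4)` up to sign.
  · have hflip := mem_span_of_commute_of_apply_one_four_ne_zero
      (negAntitranspose_mem_upperBand hA) (negAntitranspose_mem_upperBand hB)
      (negAntitranspose_mem_upperBand hE) (by rw [← LieEquiv.map_lie, hC])
      (by rw [← LieEquiv.map_lie, hZ₁]) (by rw [← LieEquiv.map_lie, hZ₂])
      hAE.negAntitranspose hBE.negAntitranspose hAZ₁.negAntitranspose hBZ₁.negAntitranspose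
      (negAntitranspose_mem_upperBand hZ₂4) (by simpa using hγ) (by simpa using hu)
    obtain ⟨a, b, h⟩ := Submodule.mem_span_pair.mp hflip
    refine Submodule.mem_span_pair.mpr ⟨a, b, negAntitranspose.injective ?_⟩
    simpa using h
  · exact mem_span_of_commute_of_apply_one_four_ne_zero hA hB hE hC hZ₁ hZ₂ hAE hBE hAZ₁ hBZ₁
      hZ₂4 hγ hw

lemma exists_sub_smul_mem_upperBand_four {X Y : Matrix (Fin 5) (Fin 5) k}
    (hX : X ∈ upperBand k 5 3) (hY : Y ∈ upperBand k 5 3) (hY4 : Y ∉ upperBand k 5 4)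
    (hXY : X 0 3 * Y 1 4 = X 1 4 * Y 0 3) : ∃ θ : k, X - θ • Y ∈ upperBand k 5 4 := by
  have hsub (θ : k) : X - θ • Y ∈ upperBand k 5 3 := sub_mem hX (Submodule.smul_mem _ θ hY)
  rcases not_and_or.mp fun h => hY4 (mem_upperBand_four hY h.1 h.2) with h | h
  · refine ⟨X 0 3 / Y 0 3, mem_upperBand_four (hsub _) ?_ ?_⟩ <;>
      simp only [Matrix.sub_apply, Matrix.smul_apply, smul_eq_mul] <;> field_simp
    · ring
    · linear_combination -hXY
  · refine ⟨X 1 4 / Y 1 4, mem_upperBand_four (hsub _) ?_ ?_⟩ <;>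
      simp only [Matrix.sub_apply, Matrix.smul_apply, smul_eq_mul] <;> field_simp
    · linear_combination hXY
    · ring

lemma apply_zero_three_mul_apply_one_four_eq (hA : A ∈ upperBand k 5 1)
    (hB : B ∈ upperBand k 5 1) (hC : ⁅A, B⁆ = C) (hZ₁ : ⁅A, C⁆ = Z₁) (hZ₂ : ⁅B, C⁆ = Z₂)
    (hAZ₁ : Commute A Z₁) (hBZ₁ : Commute B Z₁) (hAZ₂ : Commute A Z₂) (hBZ₂ : Commute B Z₂) :
    Z₁ 0 3 * Z₂ 1 4 = Z₁ 1 4 * Z₂ 0 3 := by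
  have hC₂ : C ∈ upperBand k 5 2 := hC ▸ lie_mem_upperBand hA hB
  have hZ₁₃ : Z₁ ∈ upperBand k 5 3 := hZ₁ ▸ lie_mem_upperBand hA hC₂
  have hZ₂₃ : Z₂ ∈ upperBand k 5 3 := hZ₂ ▸ lie_mem_upperBand hB hC₂
  have hc₀ : C 0 2 = A 0 1 * B 1 2 - B 0 1 * A 1 2 := hC ▸ lie_apply_zero_two hA hB
  have hc₂ : C 2 4 = A 2 3 * B 3 4 - B 2 3 * A 3 4 := hC ▸ lie_apply_two_four hA hB
  have hu₁ : Z₁ 0 3 = A 0 1 * C 1 3 - C 0 2 * A 2 3 := hZ₁ ▸ lie_apply_zero_three hA hC₂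
  have hw₁ : Z₁ 1 4 = A 1 2 * C 2 4 - C 1 3 * A 3 4 := hZ₁ ▸ lie_apply_one_four hA hC₂
  have cA₁ := (lie_apply_zero_four_of_mem_three hA hZ₁₃).symm.trans
    (lie_apply_eq_zero_of_commute hAZ₁ 0 4)
  have cB₁ := (lie_apply_zero_four_of_mem_three hB hZ₁₃).symm.trans
    (lie_apply_eq_zero_of_commute hBZ₁ 0 4)
  have cA₂ := (lie_apply_zero_four_of_mem_three hA hZ₂₃).symm.trans
    (lie_apply_eq_zero_of_commute hAZ₂ 0 4)
  have cB₂ := (lie_apply_zero_four_of_mem_three hB hZ₂₃).symm.trans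
    (lie_apply_eq_zero_of_commute hBZ₂ 0 4)
  set D := Z₁ 0 3 * Z₂ 1 4 - Z₁ 1 4 * Z₂ 0 3 with hD
  have ha₀ : A 0 1 * D = 0 := by linear_combination Z₁ 0 3 * cA₂ - Z₂ 0 3 * cA₁
  have ha₃ : A 3 4 * D = 0 := by linear_combination Z₁ 1 4 * cA₂ - Z₂ 1 4 * cA₁
  have hb₀ : B 0 1 * D = 0 := by linear_combination Z₁ 0 3 * cB₂ - Z₂ 0 3 * cB₁
  have hb₃ : B 3 4 * D = 0 := by linear_combination Z₁ 1 4 * cB₂ - Z₂ 1 4 * cB₁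
  have hc₀D : C 0 2 * D = 0 := by linear_combination D * hc₀ + B 1 2 * ha₀ - A 1 2 * hb₀
  have hc₂D : C 2 4 * D = 0 := by linear_combination D * hc₂ + A 2 3 * hb₃ - B 2 3 * ha₃
  have hu₁D : Z₁ 0 3 * D = 0 := by linear_combination D * hu₁ + C 1 3 * ha₀ - A 2 3 * hc₀D
  have hw₁D : Z₁ 1 4 * D = 0 := by linear_combination D * hw₁ + A 1 2 * hc₂D - C 1 3 * ha₃
  have hD₀ : D = 0 := mul_self_eq_zero.mp (by
    linear_combination D * hD + Z₂ 1 4 * hu₁D - Z₂ 0 3 * hw₁D)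
  linear_combination hD₀ - hD

lemma mem_span_of_commute (hA : A ∈ upperBand k 5 1) (hB : B ∈ upperBand k 5 1)
    (hE : E ∈ upperBand k 5 1) (hC : ⁅A, B⁆ = C) (hZ₁ : ⁅A, C⁆ = Z₁) (hZ₂ : ⁅B, C⁆ = Z₂)
    (hAE : Commute A E) (hBE : Commute B E) (hAZ₁ : Commute A Z₁) (hBZ₁ : Commute B Z₁)
    (hAZ₂ : Commute A Z₂) (hBZ₂ : Commute B Z₂) (hind : LinearIndependent k ![Z₁, Z₂]) :
    E ∈ Submodule.span k {Z₁, Z₂} := by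
  have hC₂ : C ∈ upperBand k 5 2 := hC ▸ lie_mem_upperBand hA hB
  have hZ₁₃ : Z₁ ∈ upperBand k 5 3 := hZ₁ ▸ lie_mem_upperBand hA hC₂
  have hZ₂₃ : Z₂ ∈ upperBand k 5 3 := hZ₂ ▸ lie_mem_upperBand hB hC₂
  by_cases hZ₂4 : Z₂ ∈ upperBand k 5 4
  · refine mem_span_of_commute_of_mem_upperBand_four hA hB hE hC hZ₁ hZ₂ hAE hBE hAZ₁ hBZ₁ hZ₂4
      (by simpa using hind.ne_zero 1) fun hZ₁4 => ?_
    simpa using add_two_le_of_linearIndependent hZ₁4 hZ₂4 hind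
  obtain ⟨θ, hθ⟩ := exists_sub_smul_mem_upperBand_four hZ₁₃ hZ₂₃ hZ₂4
    (apply_zero_three_mul_apply_one_four_eq hA hB hC hZ₁ hZ₂ hAZ₁ hBZ₁ hAZ₂ hBZ₂)
  have hne : θ • Z₂ - Z₁ ≠ 0 := fun h => one_ne_zero <| neg_eq_zero.mp
    (LinearIndependent.pair_iff.mp hind (-1) θ (by rw [← h]; module)).1
  -- The generators `B, A - θ • B` span the same plane as `A, B`, and their `Z₂` is `θ • Z₂ - Z₁`.
  have hspan := mem_span_of_commute_of_mem_upperBand_four hB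
    (sub_mem hA (Submodule.smul_mem _ θ hB)) hE (C := -C)
    (by rw [lie_sub, lie_smul, lie_self, smul_zero, sub_zero, ← lie_skew, hC])
    (by rw [lie_neg, hZ₂]) (by rw [sub_lie, smul_lie, lie_neg, lie_neg, hZ₁, hZ₂]; module)
    hBE (hAE.sub_left (hBE.smul_left θ)) hBZ₂.neg_right
    (hAZ₂.sub_left (hBZ₂.smul_left θ)).neg_right (neg_sub Z₁ (θ • Z₂) ▸ neg_mem hθ) hne
    (by rwa [neg_mem_iff])
  obtain ⟨a, b, h⟩ := Submodule.mem_span_pair.mp hspan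
  exact Submodule.mem_span_pair.mpr ⟨-b, b * θ - a, by rw [← h]; module⟩

end Centralizer

end StrictUpperBand

open StrictUpperBand in
theorem six_le_of_L69_subalgebra_strictUpper_general
    (k : Type*) [Field k] (n : ℕ)
    (g : LieSubalgebra k (Matrix (Fin n) (Fin n) k)) (hg : g ≤ strictUpper k n)
    (b : Module.Basis (Fin 6) k g) (hb : IsL69Basis b) :
    6 ≤ n := by
  obtain ⟨h01, h02, h12, h03, h04, h05, h13, h14, h15, -⟩ := hb
  set M : Fin 6 → Matrix (Fin n) (Fin n) k := fun i => b i
  have hM (i : Fin 6) : M i ∈ upperBand k n 1 := mem_upperBand_one_of_mem_strictUpper (hg (b i).2)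
  have hli : LinearIndependent k M :=
    b.linearIndependent.map' g.toSubmodule.subtype (Submodule.ker_subtype _)
  have hZ : LinearIndependent k ![M 4, M 5] := by
    convert hli.comp ![4, 5] (by decide) using 1
    ext i; fin_cases i <;> rfl
  have hlie {i j l : Fin 6} (h : ⁅b i, b j⁆ = b l) : ⁅M i, M j⁆ = M l := congrArg Subtype.val h
  have hcomm {i j : Fin 6} (h : ⁅b i, b j⁆ = 0) : Commute (M i) (M j) :=
    commute_iff_lie_eq.mpr (congrArg Subtype.val h)
  have h5 : 5 ≤ n := add_two_le_of_linearIndependent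
    (hlie h02 ▸ lie_mem_upperBand (hM 0) (hlie h01 ▸ lie_mem_upperBand (hM 0) (hM 1)))
    (hlie h12 ▸ lie_mem_upperBand (hM 1) (hlie h01 ▸ lie_mem_upperBand (hM 0) (hM 1))) hZ
  obtain rfl | h6 : n = 5 ∨ 6 ≤ n := by omega
  · have hspan := mem_span_of_commute (hM 0) (hM 1) (hM 3) (hlie h01) (hlie h02) (hlie h12)
      (hcomm h03) (hcomm h13) (hcomm h04) (hcomm h14) (hcomm h05) (hcomm h15) hZ
    exact (hli.notMem_span_image (s := {4, 5}) (x := 3) (by decide)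
      (by simpa [Set.image_pair] using hspan)).elim
  · exact h6

/-- If a Lie subalgebra of the strictly upper triangular matrices `n_n(k)` is isomorphic to
`L_{6,9}` (i.e. admits a basis with the `L_{6,9}` bracket table), then `n ≥ 6`. -/
theorem six_le_of_L69_subalgebra_strictUpper
    (k : Type*) [Field k] [CharZero k] (n : ℕ)
    (g : LieSubalgebra k (Matrix (Fin n) (Fin n) k)) (hg : g ≤ strictUpper k n)
    (b : Module.Basis (Fin 6) k g) (hb : IsL69Basis b) :
    6 ≤ n :=
  six_le_of_L69_subalgebra_strictUpper_general k n g hg b hb
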